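/- arXiv:2301.00612 — 2 statements merged into one kernel-verified Lean document; each statement's English description precedes it below -/
import Mathlib

section
/- Let q > 1 be a real number and let α₁, α₂, β₁, β₂ be nonzero complex numbers with α₁ ≠ α₂ and β₁ ≠ β₂, each of absolute value at most 1, and let s be a complex number with Re(s) > 0. Then the series ∑_{n=0}^∞ ((α₁^{n+1} - α₂^{n+1})/(α₁ - α₂)) · ((β₁^{n+1} - β₂^{n+1})/(β₁ - β₂)) · q^{-ns} converges and equals (1 - α₁α₂β₁β₂ q^{-2s}) / ((1 - α₁β₁q^{-s})(1 - α₁β₂q^{-s})(1 - α₂β₁q^{-s})(1 - α₂β₂q^{-s})). -/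
/-!
Writing `hₙ(a₁, a₂) = (a₁ⁿ⁺¹ - a₂ⁿ⁺¹)/(a₁ - a₂)`, the product `hₙ(α) hₙ(β)` is the alternating sum of
the four powers `(αᵢβⱼ)ⁿ⁺¹` divided by `(α₁ - α₂)(β₁ - β₂)`. With `t = q^{-s}`, `‖t‖ < 1` and each
`αᵢβⱼt` lies in the open unit disc, so the series splits into four geometric series, and the
resulting sum of four simple fractions collapses to the stated rational function.
-/

open Complex

theorem hasSum_pow_succ_mul_pow {K : Type*} [NormedField K] [CompleteSpace K] {γ t : K}
    (h : ‖γ * t‖ < 1) : HasSum (fun n : ℕ => γ ^ (n + 1) * t ^ n) (γ / (1 - γ * t)) := by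
  have hterm : (fun n : ℕ => γ ^ (n + 1) * t ^ n) = fun n => γ * (γ * t) ^ n := by
    funext n
    ring
  rw [hterm, div_eq_mul_inv]
  exact (hasSum_geometric_of_norm_lt_one h).mul_left γ

theorem sub_pow_div_sub_mul_sub_pow_div_sub {K : Type*} [Field K] (a₁ a₂ b₁ b₂ : K) (n : ℕ) :
    (a₁ ^ n - a₂ ^ n) / (a₁ - a₂) * ((b₁ ^ n - b₂ ^ n) / (b₁ - b₂)) =
      ((a₁ * b₁) ^ n - (a₁ * b₂) ^ n - (a₂ * b₁) ^ n + (a₂ * b₂) ^ n) /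
        ((a₁ - a₂) * (b₁ - b₂)) := by
  rw [div_mul_div_comm]
  congr 1
  simp only [mul_pow]
  ring

theorem rankinSelberg_partialFractions {K : Type*} [Field K] {a₁ a₂ b₁ b₂ t : K}
    (ha : a₁ ≠ a₂) (hb : b₁ ≠ b₂) (h₁₁ : 1 - a₁ * b₁ * t ≠ 0) (h₁₂ : 1 - a₁ * b₂ * t ≠ 0)
    (h₂₁ : 1 - a₂ * b₁ * t ≠ 0) (h₂₂ : 1 - a₂ * b₂ * t ≠ 0) :
    (a₁ * b₁ / (1 - a₁ * b₁ * t) - a₁ * b₂ / (1 - a₁ * b₂ * t) -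
        a₂ * b₁ / (1 - a₂ * b₁ * t) + a₂ * b₂ / (1 - a₂ * b₂ * t)) /
        ((a₁ - a₂) * (b₁ - b₂)) =
      (1 - a₁ * a₂ * b₁ * b₂ * t ^ 2) /
        ((1 - a₁ * b₁ * t) * (1 - a₁ * b₂ * t) * (1 - a₂ * b₁ * t) * (1 - a₂ * b₂ * t)) := by
  have hden := mul_ne_zero (mul_ne_zero (mul_ne_zero h₁₁ h₁₂) h₂₁) h₂₂
  rw [div_eq_div_iff (mul_ne_zero (sub_ne_zero.mpr ha) (sub_ne_zero.mpr hb)) hden,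
    div_sub_div _ _ h₁₁ h₁₂, div_sub_div _ _ (mul_ne_zero h₁₁ h₁₂) h₂₁,
    div_add_div _ _ (mul_ne_zero (mul_ne_zero h₁₁ h₁₂) h₂₁) h₂₂, div_mul_eq_mul_div,
    mul_div_cancel_right₀ _ hden]
  ring

theorem one_sub_ne_zero_of_norm_lt_one {K : Type*} [NormedDivisionRing K] {x : K}
    (h : ‖x‖ < 1) : 1 - x ≠ 0 := by
  rw [sub_ne_zero]
  rintro rfl
  simp at h

theorem hasSum_rankinSelberg {K : Type*} [NormedField K] [CompleteSpace K] {a₁ a₂ b₁ b₂ t : K}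
    (ha : a₁ ≠ a₂) (hb : b₁ ≠ b₂) (h₁₁ : ‖a₁ * b₁ * t‖ < 1) (h₁₂ : ‖a₁ * b₂ * t‖ < 1)
    (h₂₁ : ‖a₂ * b₁ * t‖ < 1) (h₂₂ : ‖a₂ * b₂ * t‖ < 1) :
    HasSum
      (fun n : ℕ => (a₁ ^ (n + 1) - a₂ ^ (n + 1)) / (a₁ - a₂) *
        ((b₁ ^ (n + 1) - b₂ ^ (n + 1)) / (b₁ - b₂)) * t ^ n)
      ((1 - a₁ * a₂ * b₁ * b₂ * t ^ 2) /
        ((1 - a₁ * b₁ * t) * (1 - a₁ * b₂ * t) * (1 - a₂ * b₁ * t) * (1 - a₂ * b₂ * t))) := by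
  have H := ((((hasSum_pow_succ_mul_pow h₁₁).sub (hasSum_pow_succ_mul_pow h₁₂)).sub
    (hasSum_pow_succ_mul_pow h₂₁)).add (hasSum_pow_succ_mul_pow h₂₂)).div_const
    ((a₁ - a₂) * (b₁ - b₂))
  rw [rankinSelberg_partialFractions ha hb (one_sub_ne_zero_of_norm_lt_one h₁₁)
    (one_sub_ne_zero_of_norm_lt_one h₁₂) (one_sub_ne_zero_of_norm_lt_one h₂₁)
    (one_sub_ne_zero_of_norm_lt_one h₂₂)] at H
  convert H using 2 with n
  rw [sub_pow_div_sub_mul_sub_pow_div_sub]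
  ring

theorem norm_mul_mul_lt_one {K : Type*} [NormedRing K] [NormMulClass K] {a b t : K}
    (ha : ‖a‖ ≤ 1) (hb : ‖b‖ ≤ 1) (ht : ‖t‖ < 1) : ‖a * b * t‖ < 1 := by
  rw [norm_mul, norm_mul]
  calc ‖a‖ * ‖b‖ * ‖t‖ ≤ 1 * 1 * ‖t‖ := by gcongr
    _ < 1 := by simpa using ht

theorem Complex.norm_ofReal_cpow_neg_lt_one {q : ℝ} (hq : 1 < q) {s : ℂ} (hs : 0 < s.re) :
    ‖(q : ℂ) ^ (-s)‖ < 1 := by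
  rw [norm_cpow_eq_rpow_re_of_pos (zero_lt_one.trans hq)]
  exact Real.rpow_lt_one_of_one_lt_of_neg hq (by simpa using hs)

theorem stmt_0_general (q : ℝ) (hq : 1 < q) (α₁ α₂ β₁ β₂ : ℂ)
    (hα : α₁ ≠ α₂) (hβ : β₁ ≠ β₂)
    (hα₁abs : ‖α₁‖ ≤ 1) (hα₂abs : ‖α₂‖ ≤ 1)
    (hβ₁abs : ‖β₁‖ ≤ 1) (hβ₂abs : ‖β₂‖ ≤ 1)
    (s : ℂ) (hs : 0 < s.re) :
    HasSum
      (fun n : ℕ =>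
        ((α₁ ^ (n + 1) - α₂ ^ (n + 1)) / (α₁ - α₂)) *
          ((β₁ ^ (n + 1) - β₂ ^ (n + 1)) / (β₁ - β₂)) *
          (q : ℂ) ^ (-(n : ℂ) * s))
      ((1 - α₁ * α₂ * β₁ * β₂ * (q : ℂ) ^ (-2 * s)) /
        ((1 - α₁ * β₁ * (q : ℂ) ^ (-s)) * (1 - α₁ * β₂ * (q : ℂ) ^ (-s)) *
          (1 - α₂ * β₁ * (q : ℂ) ^ (-s)) * (1 - α₂ * β₂ * (q : ℂ) ^ (-s)))) := by
  have ht := norm_ofReal_cpow_neg_lt_one hq hs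
  have hpow (n : ℕ) : (q : ℂ) ^ (-(n : ℂ) * s) = ((q : ℂ) ^ (-s)) ^ n := by
    rw [← cpow_nat_mul]
    ring_nf
  have hpow_two : (q : ℂ) ^ (-2 * s) = ((q : ℂ) ^ (-s)) ^ 2 := by
    exact_mod_cast hpow 2
  simp only [hpow, hpow_two]
  exact hasSum_rankinSelberg hα hβ (norm_mul_mul_lt_one hα₁abs hβ₁abs ht)
    (norm_mul_mul_lt_one hα₁abs hβ₂abs ht) (norm_mul_mul_lt_one hα₂abs hβ₁abs ht)
    (norm_mul_mul_lt_one hα₂abs hβ₂abs ht)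

/-- Unramified Rankin–Selberg zeta computation: the series
`∑ ((α₁^{n+1}-α₂^{n+1})/(α₁-α₂))((β₁^{n+1}-β₂^{n+1})/(β₁-β₂)) q^{-ns}` converges to
`(1 - α₁α₂β₁β₂ q^{-2s}) / ∏ (1 - αᵢβⱼ q^{-s})`. -/
theorem stmt_0 (q : ℝ) (hq : 1 < q) (α₁ α₂ β₁ β₂ : ℂ)
    (hα₁ : α₁ ≠ 0) (hα₂ : α₂ ≠ 0) (hβ₁ : β₁ ≠ 0) (hβ₂ : β₂ ≠ 0)
    (hα : α₁ ≠ α₂) (hβ : β₁ ≠ β₂)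
    (hα₁abs : ‖α₁‖ ≤ 1) (hα₂abs : ‖α₂‖ ≤ 1)
    (hβ₁abs : ‖β₁‖ ≤ 1) (hβ₂abs : ‖β₂‖ ≤ 1)
    (s : ℂ) (hs : 0 < s.re) :
    HasSum
      (fun n : ℕ =>
        ((α₁ ^ (n + 1) - α₂ ^ (n + 1)) / (α₁ - α₂)) *
          ((β₁ ^ (n + 1) - β₂ ^ (n + 1)) / (β₁ - β₂)) *
          (q : ℂ) ^ (-(n : ℂ) * s))
      ((1 - α₁ * α₂ * β₁ * β₂ * (q : ℂ) ^ (-2 * s)) /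
        ((1 - α₁ * β₁ * (q : ℂ) ^ (-s)) * (1 - α₁ * β₂ * (q : ℂ) ^ (-s)) *
          (1 - α₂ * β₁ * (q : ℂ) ^ (-s)) * (1 - α₂ * β₂ * (q : ℂ) ^ (-s)))) :=
  stmt_0_general q hq α₁ α₂ β₁ β₂ hα hβ hα₁abs hα₂abs hβ₁abs hβ₂abs s hs
end

section
/- Let F be a p-adic field with p ≠ 2, E/F an unramified quadratic field extension with ring of integers O_E and uniformizer ϖ (which can be taken in F), and ε ∈ O_E an element with ε² ∈ O_F^× and trace Tr_{E/F}(ε) = 0 (so O_E = O_F + O_F ε). For every integer i ≥ 0, an element x of the norm-one group E¹ = {x ∈ E^× : N_{E/F}(x) = 1} satisfies x ∈ 1 + ϖⁱ O_E if and only if x ∈ 1 + ϖⁱ ε O_i, where O_i = O_F + ϖⁱ O_E. -/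
/-!
Write `x = 1 + ϖⁱ (a + b ε)` with `a, b ∈ O_F`. Since `ε̄ = -ε`, the norm of `x` is
`1 + ϖⁱ (2a + ϖⁱ (a² - b² ε²))`, so `N(x) = 1` gives `2a ∈ ϖⁱ O_F`, hence `a ∈ ϖⁱ O_F` as `2` is a
unit. Writing `a = ϖⁱ c`, we get `x = 1 + ϖⁱ ε (b + ϖⁱ c ε ε⁻²)` with `ε⁻² ∈ O_F^×`.
-/

theorem dvd_of_two_mul_add_mul_eq_zero {A : Type*} [CommRing A] (h2 : IsUnit (2 : A))
    {a t c : A} (h : 2 * a + t * c = 0) : t ∣ a := by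
  obtain ⟨v, hv⟩ := h2.exists_left_inv
  exact ⟨-(v * c), by linear_combination v * h - a * hv⟩

section Conjugation

variable {A B : Type*} [CommRing A] [CommRing B] [Algebra A B] (σ : B →ₐ[A] B) {ε : B}

local notation "ι" => algebraMap A B

theorem conj_algebraMap_add_mul (hσε : σ ε = -ε) (a b : A) :
    σ (ι a + ι b * ε) = ι a - ι b * ε := by
  simp only [map_add, map_mul, AlgHom.commutes, hσε]
  ring

theorem mul_conj_one_add_mul (hσε : σ ε = -ε) {u : A} (hu : ε * ε = ι u) (t a b : A) :
    (1 + ι t * (ι a + ι b * ε)) * σ (1 + ι t * (ι a + ι b * ε))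
      = 1 + ι t * ι (2 * a + t * (a * a - b * b * u)) := by
  rw [map_add, map_one, map_mul, AlgHom.commutes, conj_algebraMap_add_mul σ hσε]
  simp only [map_add, map_sub, map_mul, map_ofNat]
  linear_combination -(ι t) ^ 2 * ι b * ι b * hu

theorem dvd_of_mul_conj_one_add_mul_eq_one [IsDomain B] (hinj : Function.Injective ι)
    (h2 : IsUnit (2 : A)) (hσε : σ ε = -ε) {u : A} (hu : ε * ε = ι u) {t : A} (ht : ι t ≠ 0)
    {a b : A} (h : (1 + ι t * (ι a + ι b * ε)) * σ (1 + ι t * (ι a + ι b * ε)) = 1) :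
    t ∣ a := by
  rw [mul_conj_one_add_mul σ hσε hu, add_eq_left, mul_eq_zero, or_iff_right ht,
    map_eq_zero_iff _ hinj] at h
  exact dvd_of_two_mul_add_mul_eq_zero h2 h

end Conjugation

theorem stmt_5_general {A B : Type*} [CommRing A]
    [CommRing B] [IsDomain B] [Algebra A B]
    (hinj : Function.Injective (algebraMap A B))
    (h2 : IsUnit (2 : A))
    (σ : B ≃ₐ[A] B)
    (ϖ : A) (hϖB : Irreducible (algebraMap A B ϖ))
    (ε : B) (hσε : σ ε = -ε)
    (hε2 : ∃ u : Aˣ, ε * ε = algebraMap A B (u : A))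
    (hgen : ∀ x : B, ∃ a b : A, x = algebraMap A B a + algebraMap A B b * ε)
    (i : ℕ) (x : B) (hx : x * σ x = 1) :
    (∃ y : B, x = 1 + algebraMap A B ϖ ^ i * y)
      ↔ (∃ a : A, ∃ b : B,
          x = 1 + algebraMap A B ϖ ^ i * ε *
            (algebraMap A B a + algebraMap A B ϖ ^ i * b)) := by
  set ι := algebraMap A B
  obtain ⟨u, hu⟩ := hε2
  constructor
  · rintro ⟨y, rfl⟩
    obtain ⟨a, b, rfl⟩ := hgen y
    have hϖi : ι (ϖ ^ i) ≠ 0 := by rw [map_pow]; exact pow_ne_zero _ hϖB.ne_zero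
    rw [← map_pow] at hx ⊢
    obtain ⟨c, rfl⟩ := dvd_of_mul_conj_one_add_mul_eq_one (σ : B →ₐ[A] B) hinj h2 hσε hu hϖi hx
    have hεinv : ε * (ε * ι ↑u⁻¹) = 1 := by
      rw [← mul_assoc, hu, ← map_mul, Units.mul_inv, map_one]
    refine ⟨b, ι c * ε * ι ↑u⁻¹, ?_⟩
    simp only [map_mul]
    linear_combination -(ι (ϖ ^ i)) ^ 2 * ι c * hεinv
  · rintro ⟨a, b, rfl⟩
    exact ⟨ε * (ι a + ι ϖ ^ i * b), by ring⟩

/-- Lemma `order-epsilon`: for `E/F` unramified quadratic with `p ≠ 2`,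
`O_E = O_F + O_F ε` with `ε̄ = -ε`, `ε² ∈ O_F^×`, and `x` in the norm-one group,
`x ∈ 1 + ϖⁱ O_E` iff `x ∈ 1 + ϖⁱ ε O_i` where `O_i = O_F + ϖⁱ O_E`. -/
theorem stmt_5 {A B : Type*} [CommRing A] [IsDomain A] [IsDiscreteValuationRing A]
    [CommRing B] [IsDomain B] [IsDiscreteValuationRing B] [Algebra A B]
    (hinj : Function.Injective (algebraMap A B))
    (h2 : IsUnit (2 : A))
    (σ : B ≃ₐ[A] B) (hσinv : ∀ x : B, σ (σ x) = x)
    (ϖ : A) (hϖ : Irreducible ϖ) (hϖB : Irreducible (algebraMap A B ϖ))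
    (ε : B) (hσε : σ ε = -ε)
    (hε2 : ∃ u : Aˣ, ε * ε = algebraMap A B (u : A))
    (hgen : ∀ x : B, ∃ a b : A, x = algebraMap A B a + algebraMap A B b * ε)
    (i : ℕ) (x : B) (hx : x * σ x = 1) :
    (∃ y : B, x = 1 + algebraMap A B ϖ ^ i * y)
      ↔ (∃ a : A, ∃ b : B,
          x = 1 + algebraMap A B ϖ ^ i * ε *
            (algebraMap A B a + algebraMap A B ϖ ^ i * b)) :=
  stmt_5_general hinj h2 σ ϖ hϖB ε hσε hε2 hgen i x hx
end
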